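/- Let L be a digit string admitting an infinite sequence of CVs. Then there exists an index N such that for all n ≥ N the height of CV_n(L) is at most 5. -/

import Mathlib

/-- A digit string is a nonempty finite list of natural numbers, each at most 9,
read most-significant-first. -/
def DigitString (L : List ℕ) : Prop := L ≠ [] ∧ ∀ d ∈ L, d ≤ 9

/-- The curriculum vitae of `L`: the digit string of length `m + 1`, where `m` is the
largest entry of `L`, whose `i`-th entry (0-indexed) counts the occurrences of `i` in `L`. -/
def CV (L : List ℕ) : List ℕ :=
  (List.range (L.foldr max 0 + 1)).map (fun i => L.count i)

/-- The sequence of CVs of `L`: `CVseq L 0 = L` and `CVseq L (n+1) = CV (CVseq L n)`. -/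
def CVseq (L : List ℕ) : ℕ → List ℕ
  | 0 => L
  | n + 1 => CV (CVseq L n)

/-- `L` admits an infinite sequence of CVs: for every `n`, each value occurs at most
9 times in `CVseq L n` (so the next CV is defined). -/
def AdmitsCVs (L : List ℕ) : Prop := ∀ n, ∀ d, (CVseq L n).count d ≤ 9

/-- The complete life story of `L`: the digit string of length 10 whose `i`-th entry
(0-indexed, `0 ≤ i ≤ 9`) counts the occurrences of `i` in `L`. -/
def CLS (L : List ℕ) : List ℕ := (List.range 10).map (fun i => L.count i)

/-- The sequence of life stories of `L`. -/
def CLSseq (L : List ℕ) : ℕ → List ℕ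
  | 0 => L
  | n + 1 => CLS (CLSseq L n)

/-- `L` admits an infinite sequence of life stories: for every `n`, each value occurs
at most 9 times in `CLSseq L n`. -/
def AdmitsCLSs (L : List ℕ) : Prop := ∀ n, ∀ d, (CLSseq L n).count d ≤ 9

/-- The height of a digit string: the maximum of (its largest entry plus 1) and its length. -/
def height (L : List ℕ) : ℕ := max (L.foldr max 0 + 1) L.length

/-!
Three identities drive the argument: the entries of `CV M` sum to the length of `M`, their
weighted sum `∑ i * (CV M)[i]` is the sum of `M`, and `CV M` has length `max M + 1` and a
positive last entry. Admissibility bounds the entries by 9 from the first CV on, hence the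
length by 10 from the second, the sum from the third and the weight from the fourth. Fewer
than a thousand strings satisfy these bounds, and running the CV map on each of them shows
that after fourteen more steps the height is at most 5: every orbit falls into the 2-cycle
`[1, 2] ↦ [0, 1, 1]` or the 6-cycle through `[1, 1, 1]`.
-/

def weightFrom : ℕ → List ℕ → ℕ
  | _, [] => 0
  | k, d :: t => k * d + weightFrom (k + 1) t

def boundedLists : ℕ → ℕ → ℕ → ℕ → List (List ℕ)
  | 0, _, _, _ => [[]]
  | n + 1, k, s, w => [] :: (List.range (s + 1)).flatMap fun d =>
      if k * d ≤ w then (boundedLists n (k + 1) (s - d) (w - k * d)).map (d :: ·) else []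

theorem mem_boundedLists {M : List ℕ} {n k s w : ℕ} (hn : M.length ≤ n) (hs : M.sum ≤ s)
    (hw : weightFrom k M ≤ w) : M ∈ boundedLists n k s w := by
  induction M generalizing n k s w with
  | nil => cases n <;> simp [boundedLists]
  | cons d t ih =>
    cases n with
    | zero => simp at hn
    | succ n =>
      simp only [List.length_cons, List.sum_cons, weightFrom] at hn hs hw
      simp only [boundedLists, List.mem_cons, reduceCtorEq, false_or, List.mem_flatMap,
        List.mem_range]
      refine ⟨d, by omega, ?_⟩
      rw [if_pos (by omega)]
      exact List.mem_map_of_mem (ih (by omega) (by omega) (by omega))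

theorem weightFrom_map_range (f : ℕ → ℕ) (n k : ℕ) :
    weightFrom k ((List.range n).map f) = ∑ i ∈ Finset.range n, (k + i) * f i := by
  induction n generalizing f k with
  | zero => rfl
  | succ n ih =>
    rw [List.range_succ_eq_map, List.map_cons, List.map_map, weightFrom, ih,
      Finset.sum_range_succ']
    simp only [Function.comp_apply, Nat.succ_eq_add_one]
    ring_nf

theorem length_CV (L : List ℕ) : (CV L).length = L.foldr max 0 + 1 := by
  simp [CV]

theorem mem_range_foldr_max_succ {L : List ℕ} {d : ℕ} (hd : d ∈ L) :
    d ∈ Finset.range (L.foldr max 0 + 1) :=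
  Finset.mem_range.2 (Nat.lt_succ_of_le (List.le_max_of_le hd le_rfl))

theorem sum_CV (L : List ℕ) : (CV L).sum = L.length := by
  change ∑ i ∈ Finset.range (L.foldr max 0 + 1), L.count i = L.length
  simpa using Multiset.sum_count_eq_card (m := (L : Multiset ℕ))
    fun d hd => mem_range_foldr_max_succ (Multiset.mem_coe.1 hd)

theorem weightFrom_zero_CV (L : List ℕ) : weightFrom 0 (CV L) = L.sum := by
  rw [CV, weightFrom_map_range, Finset.sum_list_count_of_subset L (Finset.range _)
    fun d hd => mem_range_foldr_max_succ (List.mem_toFinset.1 hd)]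
  simp [mul_comm]

theorem getLastD_CV_pos {L : List ℕ} (hL : L ≠ []) : 0 < (CV L).getLastD 0 := by
  rw [CV, List.range_succ, List.map_append, List.map_singleton, List.getLastD_concat]
  exact List.count_pos_iff.2 (List.maximum_mem (List.foldr_max_of_ne_nil hL).symm)

theorem CVseq_add (L : List ℕ) (m k : ℕ) : CVseq L (m + k) = CV^[k] (CVseq L m) := by
  induction k with
  | zero => rfl
  | succ k ih => rw [Function.iterate_succ_apply', ← ih]; rfl

theorem le_nine_of_mem_CVseq_succ {L : List ℕ} (h : AdmitsCVs L) {n d : ℕ}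
    (hd : d ∈ CVseq L (n + 1)) : d ≤ 9 := by
  obtain ⟨i, -, rfl⟩ := List.mem_map.1 hd
  exact h n i

theorem length_CVseq_le_ten {L : List ℕ} (h : AdmitsCVs L) (n : ℕ) :
    (CVseq L (n + 2)).length ≤ 10 := by
  rw [CVseq, length_CV]
  have : (CVseq L (n + 1)).foldr max 0 ≤ 9 :=
    List.max_le_of_forall_le _ _ fun _ hd => le_nine_of_mem_CVseq_succ h hd
  omega

theorem getLastD_CVseq_pos (L : List ℕ) (n : ℕ) : 0 < (CVseq L (n + 2)).getLastD 0 :=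
  getLastD_CV_pos (List.ne_nil_of_length_pos (by rw [CVseq, length_CV]; omega))

set_option maxRecDepth 10000 in
theorem height_iterate_CV_le_five_of_mem_boundedLists :
    ∀ M ∈ boundedLists 10 0 10 10, 0 < M.getLastD 0 → height (CV^[14] M) ≤ 5 := by
  decide +kernel

theorem height_iterate_CV_le_five {M : List ℕ} (hl : M.length ≤ 10) (hs : M.sum ≤ 10)
    (hw : weightFrom 0 M ≤ 10) (hM : 0 < M.getLastD 0) : height (CV^[14] M) ≤ 5 :=
  height_iterate_CV_le_five_of_mem_boundedLists M (mem_boundedLists hl hs hw) hM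

theorem cvseq_height_eventually_le_five_general (L : List ℕ)
    (h : AdmitsCVs L) :
    ∃ N, ∀ n, N ≤ n → height (CVseq L n) ≤ 5 := by
  refine ⟨18, fun n hn => ?_⟩
  obtain ⟨m, rfl⟩ := Nat.exists_eq_add_of_le' hn
  have hl : (CVseq L (m + 4)).length ≤ 10 := length_CVseq_le_ten h (m + 2)
  have hs : (CVseq L (m + 4)).sum ≤ 10 := by
    rw [CVseq, sum_CV]; exact length_CVseq_le_ten h (m + 1)
  have hw : weightFrom 0 (CVseq L (m + 4)) ≤ 10 := by
    rw [CVseq, weightFrom_zero_CV, CVseq, sum_CV]; exact length_CVseq_le_ten h m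
  rw [show m + 18 = m + 4 + 14 by omega, CVseq_add]
  exact height_iterate_CV_le_five hl hs hw (getLastD_CVseq_pos L (m + 2))

theorem cvseq_height_eventually_le_five (L : List ℕ) (hL : DigitString L)
    (h : AdmitsCVs L) :
    ∃ N, ∀ n, N ≤ n → height (CVseq L n) ≤ 5 :=
  cvseq_height_eventually_le_five_general L h
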